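/- arXiv:2201.08113 — 3 statements merged into one kernel-verified Lean document; each statement's English description precedes it below -/
import Mathlib

section
/- There exists a positive integer ℓ₀ such that for every positive integer ℓ the Voronoi polytope Σ_{ℓ₀ℓ}(0) is integral. -/
/-!
For `t > 0` the cell `Σ_t(0)` is the set of `x` with `B̄(x, w) ≤ t B̄(w, w)` for all
`w ∈ φ(X^∨) ⊆ Y`. Pairing with `±φ(e_i^*)` gives `N |x_i| ≤ t B̄(φ(e_i^*), φ(e_i^*))`, and on
such a box every constraint with `‖w‖` beyond a bound independent of `t` holds automatically.
Hence the cell is cut out by a fixed finite set `F` of lattice vectors. At a vertex the active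
constraints determine the point: `M x = t c` with `M` (rows `B(w, ·)`) and `c` integral and
`M` injective, so `det(MᵀM) x ∈ t ℤ^g`. If `t` is divisible by all the nonzero `det(M_AᵀM_A)`,
`A ⊆ F`, every vertex is a lattice point, and Krein–Milman gives `Σ_t(0) = conv(Σ_t(0) ∩ X)`.
Finally `e_i ∈ Σ_t(0)` once `t ≥ ‖e_i‖`, because `B(w, w) ≥ 1` for `w ≠ 0`.
-/

open scoped BigOperators Pointwise

namespace NFC

/-- The coordinatewise embedding of the lattice `X = ℤ^g` into `X_ℝ = ℝ^g`. -/
def iota {g : ℕ} (x : Fin g → ℤ) : Fin g → ℝ := fun i => (x i : ℝ)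

/-- The ℝ-linear extension of an integral linear functional `u ∈ X^∨` to `X_ℝ`. -/
noncomputable def extd {g : ℕ} (u : (Fin g → ℤ) →ₗ[ℤ] ℤ) (x : Fin g → ℝ) : ℝ :=
  ∑ i, (u (Pi.single i 1) : ℝ) * x i

/-- `E_ℓ(u) = ℓ · u(φ(u))`. -/
def El {g : ℕ} {Y : Submodule ℤ (Fin g → ℤ)}
    (φ : ((Fin g → ℤ) →ₗ[ℤ] ℤ) → Y) (ℓ : ℕ) (u : (Fin g → ℤ) →ₗ[ℤ] ℤ) : ℤ :=
  (ℓ : ℤ) * u (φ u : Fin g → ℤ)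

/-- `Σ_ℓ = {α ∈ X : E_ℓ(u) + u(α) ≥ 0 for all u ∈ X^∨}`. -/
def SigmaL {g : ℕ} {Y : Submodule ℤ (Fin g → ℤ)}
    (φ : ((Fin g → ℤ) →ₗ[ℤ] ℤ) → Y) (ℓ : ℕ) : Set (Fin g → ℤ) :=
  {α | ∀ u : (Fin g → ℤ) →ₗ[ℤ] ℤ, 0 ≤ El φ ℓ u + u α}

/-- The Voronoi polytope `Σ_ℓ(c)`, defined w.r.t. the norm `‖z‖ = √(B̄(z,z))`. -/
noncomputable def VorP {g : ℕ} {Y : Submodule ℤ (Fin g → ℤ)}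
    (Bb : (Fin g → ℝ) →ₗ[ℝ] (Fin g → ℝ) →ₗ[ℝ] ℝ)
    (φ : ((Fin g → ℤ) →ₗ[ℤ] ℤ) → Y) (ℓ : ℕ)
    (c : (Fin g → ℤ) →ₗ[ℤ] ℤ) : Set (Fin g → ℝ) :=
  {x | ∀ u : (Fin g → ℤ) →ₗ[ℤ] ℤ,
    Real.sqrt (Bb (x - iota ((2 * (ℓ : ℤ)) • ((φ c : Fin g → ℤ))))
               (x - iota ((2 * (ℓ : ℤ)) • ((φ c : Fin g → ℤ))))) ≤
    Real.sqrt (Bb (x - iota ((2 * (ℓ : ℤ)) • ((φ u : Fin g → ℤ))))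
               (x - iota ((2 * (ℓ : ℤ)) • ((φ u : Fin g → ℤ)))))}

/-- A subset `Δ ⊆ X_ℝ` is integral: a bounded convex polytope equal to the convex hull
of `Δ ∩ X`, symmetric about `0`, containing `0`, with `Δ ∩ X` containing a ℤ-basis. -/
def IsIntegral {g : ℕ} (Δ : Set (Fin g → ℝ)) : Prop :=
  Bornology.IsBounded Δ ∧
  Δ = convexHull ℝ (Δ ∩ Set.range (iota (g := g))) ∧
  Δ = -Δ ∧ (0 : Fin g → ℝ) ∈ Δ ∧
  ∃ b : Module.Basis (Fin g) ℤ (Fin g → ℤ), ∀ i, iota (b i) ∈ Δ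

/-- `Σ_ℓ^α = (α + 2ℓφ(X^∨)) ∩ Σ_ℓ`. -/
def SigmaAlpha {g : ℕ} {Y : Submodule ℤ (Fin g → ℤ)}
    (φ : ((Fin g → ℤ) →ₗ[ℤ] ℤ) → Y) (ℓ : ℕ) (α : Fin g → ℤ) : Set (Fin g → ℤ) :=
  {β | β ∈ SigmaL φ ℓ ∧ ∃ u : (Fin g → ℤ) →ₗ[ℤ] ℤ, β = α + (2 * (ℓ : ℤ)) • ((φ u : Fin g → ℤ))}

/-- The convex cone generated by a set `S` (the set of all nonnegative combinations). -/
def conicHull {M : Type*} [AddCommMonoid M] [Module ℝ M] (S : Set M) : Set M :=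
  {y | ∃ (n : ℕ) (c : Fin n → ℝ) (v : Fin n → M),
    (∀ i, 0 ≤ c i) ∧ (∀ i, v i ∈ S) ∧ y = ∑ i, c i • v i}

/-- `Cone(C_ℓ^β)`: the convex cone in `X_ℝ` generated by `{γ − β : γ ∈ Σ_ℓ}`. -/
def coneC {g : ℕ} {Y : Submodule ℤ (Fin g → ℤ)}
    (φ : ((Fin g → ℤ) →ₗ[ℤ] ℤ) → Y) (ℓ : ℕ) (β : Fin g → ℤ) : Set (Fin g → ℝ) :=
  conicHull {w | ∃ γ ∈ SigmaL φ ℓ, w = iota (γ - β)}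

open Set Filter Topology
open scoped Matrix

/-- Inactive constraints stay inactive near `x` and active ones are unchanged along `v`, so
`x ± εv` stays in the polyhedron; extremality forces `v = 0`. -/
theorem eq_zero_of_mem_extremePoints_of_forall_active {ι E : Type*} [AddCommGroup E]
    [Module ℝ E] {s : Set ι} (hs : s.Finite) (f : ι → E →ₗ[ℝ] ℝ) (c : ι → ℝ) {x v : E}
    (hx : x ∈ extremePoints ℝ {y | ∀ i ∈ s, f i y ≤ c i})
    (hv : ∀ i ∈ s, f i x = c i → f i v = 0) : v = 0 := by
  have hnear : ∀ᶠ σ in 𝓝 (0 : ℝ), ∀ i ∈ s, f i (x + σ • v) ≤ c i := by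
    rw [eventually_all_finite hs]
    intro i hi
    simp only [map_add, map_smul, smul_eq_mul]
    by_cases hact : f i x = c i
    · exact Eventually.of_forall fun σ => by simp [hact, hv i hi hact]
    · have hlt : f i x < c i := lt_of_le_of_ne (hx.1 i hi) hact
      have hcont : Tendsto (fun σ : ℝ => f i x + σ * f i v) (𝓝 0) (𝓝 (f i x)) := by
        simpa using ((tendsto_id (x := 𝓝 (0 : ℝ))).mul_const (f i v)).const_add (f i x)
      exact (hcont.eventually (eventually_lt_nhds hlt)).mono fun _ => le_of_lt
  obtain ⟨ε, hε, hball⟩ := Metric.eventually_nhds_iff_ball.mp hnear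
  have hmem : ∀ σ : ℝ, |σ| < ε → x + σ • v ∈ {y | ∀ i ∈ s, f i y ≤ c i} := fun σ hσ =>
    hball σ (by simpa using hσ)
  have hseg : x ∈ openSegment ℝ (x + (-(ε / 2)) • v) (x + (ε / 2) • v) :=
    ⟨1 / 2, 1 / 2, by norm_num, by norm_num, by norm_num, by module⟩
  have heq := hx.2 (hmem _ (by rw [abs_neg, abs_of_pos (by positivity)]; linarith))
    (hmem _ (by rw [abs_of_pos (by positivity)]; linarith)) hseg
  rw [neg_smul, ← sub_eq_add_neg, sub_eq_self] at heq
  exact (smul_eq_zero.mp heq).resolve_left (by positivity)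

section IntegerSystems

variable {ι n : Type*} [Fintype ι]

theorem map_intCast_transpose_mul_self (M : Matrix ι n ℤ) :
    (Mᵀ * M).map ((↑) : ℤ → ℝ) = (M.map ((↑) : ℤ → ℝ))ᴴ * M.map ((↑) : ℤ → ℝ) := by
  ext i j
  simp [Matrix.mul_apply]

theorem det_transpose_mul_self_ne_zero [Fintype n] [DecidableEq n] (M : Matrix ι n ℤ)
    (hM : Function.Injective (M.map ((↑) : ℤ → ℝ)).mulVec) : (Mᵀ * M).det ≠ 0 := by
  have hpos := (Matrix.PosDef.conjTranspose_mul_self _ hM).det_pos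
  rw [← map_intCast_transpose_mul_self, ← Int.cast_det] at hpos
  exact_mod_cast hpos.ne'

theorem det_smul_eq_of_mulVec_eq [Fintype n] [DecidableEq n] (M : Matrix ι n ℤ) (c : ι → ℤ)
    {x : n → ℝ} (hx : M.map ((↑) : ℤ → ℝ) *ᵥ x = fun i => (c i : ℝ)) :
    ((Mᵀ * M).det : ℝ) • x = fun j => (((Mᵀ * M).adjugate *ᵥ (Mᵀ *ᵥ c)) j : ℝ) := by
  set f := Int.castRingHom ℝ
  set A := M.map f
  have hG : (Mᵀ * M).map f = Aᴴ * A := map_intCast_transpose_mul_self M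
  have hc : f ∘ (Mᵀ *ᵥ c) = Aᴴ *ᵥ (A *ᵥ x) := by
    funext i
    rw [Function.comp_apply, RingHom.map_mulVec, Matrix.conjTranspose_eq_transpose_of_trivial,
      Matrix.transpose_map]
    exact congrArg (fun v => (Mᵀ.map f *ᵥ v) i) hx.symm
  funext j
  change (((Mᵀ * M).det : ℝ) • x) j = f _
  rw [RingHom.map_mulVec, ← f.mapMatrix_apply, RingHom.map_adjugate, f.mapMatrix_apply, hG, hc,
    Matrix.mulVec_mulVec, Matrix.mulVec_mulVec, Matrix.mul_assoc, Matrix.adjugate_mul,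
    Matrix.smul_mulVec, Matrix.one_mulVec, Int.cast_det]
  exact congrArg (fun G : Matrix n n ℝ => (G.det • x) j) hG

end IntegerSystems

theorem abs_apply_le_sqrt_mul_sqrt {E : Type*} [AddCommGroup E] [Module ℝ E]
    (Bb : LinearMap.BilinForm ℝ E) (hsymm : ∀ x y, Bb x y = Bb y x) (hnonneg : ∀ x, 0 ≤ Bb x x)
    (x y : E) : |Bb x y| ≤ √(Bb x x) * √(Bb y y) := by
  rw [← Real.sqrt_mul (hnonneg x)]
  apply Real.abs_le_sqrt
  simpa only [hsymm y x, ← sq] using Bb.apply_mul_apply_le_of_forall_zero_le hnonneg x y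

section Lattice

variable {g : ℕ}

@[simp] theorem iota_apply (x : Fin g → ℤ) (i : Fin g) : iota x i = x i := rfl

@[simp] theorem iota_zero : iota (0 : Fin g → ℤ) = 0 := by ext; simp

theorem iota_neg (x : Fin g → ℤ) : iota (-x) = -iota x := by ext; simp

theorem iota_zsmul (n : ℤ) (x : Fin g → ℤ) : iota (n • x) = (n : ℝ) • iota x := by ext; simp

theorem iota_single (i : Fin g) : iota (Pi.single i (1 : ℤ)) = Pi.single i (1 : ℝ) := by
  ext j; by_cases h : j = i <;> simp [h]

theorem finite_setOf_forall_abs_le (C : ℝ) :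
    {z : Fin g → ℤ | ∀ i, |(z i : ℝ)| ≤ C}.Finite := by
  have hle : ∀ z : Fin g → ℤ, (∀ i, |(z i : ℝ)| ≤ C) → ∀ i, |z i| ≤ ⌈C⌉ := fun z hz i =>
    Int.cast_le.mp ((by simpa using hz i : ((|z i| : ℤ) : ℝ) ≤ C).trans (Int.le_ceil C))
  exact (finite_Icc (fun _ => -⌈C⌉) fun _ => ⌈C⌉).subset fun z hz =>
    ⟨fun i => (abs_le.mp (hle z hz i)).1, fun i => (abs_le.mp (hle z hz i)).2⟩

theorem apply_eq_sum_mul_single (f : (Fin g → ℝ) →ₗ[ℝ] ℝ) (x : Fin g → ℝ) :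
    f x = ∑ j, x j * f (Pi.single j 1) := by
  conv_lhs => rw [← (Pi.basisFun ℝ (Fin g)).sum_repr x]
  simp [map_sum, map_smul]

theorem isIntegral_of_extremePoints_subset {V : Set (Fin g → ℝ)} {s : ℝ}
    (hbox : ∀ x ∈ V, ∀ i, |x i| ≤ s) (hclosed : IsClosed V) (hconv : Convex ℝ V)
    (hneg : ∀ x ∈ V, -x ∈ V) (h0 : 0 ∈ V) (hsingle : ∀ i, Pi.single i 1 ∈ V)
    (hext : extremePoints ℝ V ⊆ range iota) : IsIntegral V := by
  have hbdd : Bornology.IsBounded V := isBounded_iff_forall_norm_le.mpr ⟨max s 0, fun x hx =>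
    (pi_norm_le_iff_of_nonneg (le_max_right _ _)).mpr fun i =>
      (hbox x hx i).trans (le_max_left _ _)⟩
  have hfin : (V ∩ range iota).Finite := ((finite_setOf_forall_abs_le s).image iota).subset
    fun _ ⟨hx, z, hz⟩ => ⟨z, fun i => by simpa [← hz] using hbox _ hx i, hz⟩
  refine ⟨hbdd, Subset.antisymm ?_ (convexHull_min inter_subset_left hconv), ?_, h0,
    Pi.basisFun ℤ (Fin g), fun i => ?_⟩
  · calc V = closure (convexHull ℝ (extremePoints ℝ V)) :=
          (closure_convexHull_extremePoints (hbdd.isCompact_closure.of_isClosed_subset hclosed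
            subset_closure) hconv).symm
      _ ⊆ closure (convexHull ℝ (V ∩ range iota)) :=
          closure_mono (convexHull_mono fun x hx => ⟨hx.1, hext hx⟩)
      _ = convexHull ℝ (V ∩ range iota) := (hfin.isClosed_convexHull ℝ).closure_eq
  · ext x
    exact ⟨fun hx => by simpa using hneg x hx, fun hx => by simpa using hneg (-x) hx⟩
  · rw [Pi.basisFun_apply, iota_single]
    exact hsingle i

variable (Bb : (Fin g → ℝ) →ₗ[ℝ] (Fin g → ℝ) →ₗ[ℝ] ℝ)

theorem apply_le_of_forall_abs_le (hsymm : ∀ x y, Bb x y = Bb y x) (hnonneg : ∀ x, 0 ≤ Bb x x)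
    {x : Fin g → ℝ} {s : ℝ} (hx : ∀ i, |x i| ≤ s) (z : Fin g → ℝ) :
    Bb x z ≤ s * (∑ i, √(Bb (Pi.single i 1) (Pi.single i 1))) * √(Bb z z) := by
  rw [← Bb.flip_apply, apply_eq_sum_mul_single, Finset.mul_sum, Finset.sum_mul]
  refine Finset.sum_le_sum fun i _ => ?_
  have hcs := abs_apply_le_sqrt_mul_sqrt Bb hsymm hnonneg (Pi.single i 1) z
  rw [LinearMap.flip_apply]
  calc x i * Bb (Pi.single i 1) z ≤ |x i| * |Bb (Pi.single i 1) z| := by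
        rw [← abs_mul]; exact le_abs_self _
    _ ≤ s * (√(Bb (Pi.single i 1) (Pi.single i 1)) * √(Bb z z)) :=
        mul_le_mul (hx i) hcs (abs_nonneg _) ((abs_nonneg _).trans (hx i))
    _ = _ := by ring

variable {Y : Submodule ℤ (Fin g → ℤ)}

/-- For `t > 0` this is the Voronoi cell of `0` in the point set `2t • W`: the condition
`‖x‖ ≤ ‖x - 2tw‖` expands to `Bb x w ≤ t * Bb w w`. -/
def voronoiCell (W : Set Y) (t : ℝ) : Set (Fin g → ℝ) :=
  {x | ∀ w ∈ W, Bb x (iota w) ≤ t * Bb (iota w) (iota w)}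

theorem voronoiCell_eq_biInter (W : Set Y) (t : ℝ) :
    voronoiCell Bb W t = ⋂ w ∈ W, {x | Bb.flip (iota w) x ≤ t * Bb (iota w) (iota w)} := by
  ext x; simp [voronoiCell]

theorem convex_voronoiCell (W : Set Y) (t : ℝ) : Convex ℝ (voronoiCell Bb W t) := by
  rw [voronoiCell_eq_biInter]
  exact convex_iInter₂ fun w _ => convex_halfSpace_le (Bb.flip (iota w)).isLinear _

theorem isClosed_voronoiCell (W : Set Y) (t : ℝ) : IsClosed (voronoiCell Bb W t) := by
  rw [voronoiCell_eq_biInter]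
  exact isClosed_biInter fun w _ =>
    isClosed_le (Bb.flip (iota w)).continuous_of_finiteDimensional continuous_const

theorem voronoiCell_anti {W W' : Set Y} (h : W ⊆ W') (t : ℝ) :
    voronoiCell Bb W' t ⊆ voronoiCell Bb W t := fun _ hx w hw => hx w (h hw)

theorem zero_mem_voronoiCell (hnonneg : ∀ x, 0 ≤ Bb x x) (W : Set Y) {t : ℝ} (ht : 0 ≤ t) :
    0 ∈ voronoiCell Bb W t := fun w _ => by simpa using mul_nonneg ht (hnonneg (iota w))

theorem neg_mem_voronoiCell {W : Set Y} (hW : ∀ w ∈ W, -w ∈ W) {t : ℝ} {x : Fin g → ℝ}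
    (hx : x ∈ voronoiCell Bb W t) : -x ∈ voronoiCell Bb W t := fun w hw => by
  simpa [iota_neg] using hx (-w) (hW w hw)

theorem abs_apply_le_of_mem_voronoiCell {W : Set Y} {w : Y} (hw : w ∈ W) (hnw : -w ∈ W)
    {t : ℝ} {x : Fin g → ℝ} (hx : x ∈ voronoiCell Bb W t) :
    |Bb x (iota w)| ≤ t * Bb (iota w) (iota w) := by
  have := hx (-w) hnw
  simp only [NegMemClass.coe_neg, iota_neg, map_neg, LinearMap.neg_apply, neg_neg] at this
  exact abs_le.mpr ⟨by linarith, hx w hw⟩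

variable (B : Y →ₗ[ℤ] (Fin g → ℤ) →ₗ[ℤ] ℤ)

theorem single_mem_voronoiCell (hsymm : ∀ x y, Bb x y = Bb y x) (hnonneg : ∀ x, 0 ≤ Bb x x)
    (hcompat : ∀ (y : Y) (x : Fin g → ℤ), Bb (iota (y : Fin g → ℤ)) (iota x) = (B y x : ℝ))
    (hBpos : ∀ y : Y, y ≠ 0 → 0 < B y (y : Fin g → ℤ)) (W : Set Y) {t : ℝ} (i : Fin g)
    (ht : √(Bb (Pi.single i 1) (Pi.single i 1)) ≤ t) : Pi.single i 1 ∈ voronoiCell Bb W t := by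
  intro w _
  rcases eq_or_ne w 0 with rfl | hw
  · simp
  have hone : 1 ≤ √(Bb (iota w) (iota w)) := by
    rw [Real.one_le_sqrt, hcompat]
    exact_mod_cast hBpos w hw
  have ht0 : 0 ≤ t := (Real.sqrt_nonneg _).trans ht
  calc Bb (Pi.single i 1) (iota w)
      ≤ √(Bb (Pi.single i 1) (Pi.single i 1)) * √(Bb (iota w) (iota w)) :=
        (le_abs_self _).trans (abs_apply_le_sqrt_mul_sqrt Bb hsymm hnonneg _ _)
    _ ≤ t * √(Bb (iota w) (iota w)) := by gcongr
    _ ≤ t * (√(Bb (iota w) (iota w)) * √(Bb (iota w) (iota w))) := by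
        gcongr; exact le_mul_of_one_le_left (Real.sqrt_nonneg _) hone
    _ = t * Bb (iota w) (iota w) := by rw [Real.mul_self_sqrt (hnonneg _)]

theorem injective_of_apply_self_pos (hBpos : ∀ y : Y, y ≠ 0 → 0 < B y (y : Fin g → ℤ)) :
    Function.Injective B :=
  (injective_iff_map_eq_zero B).mpr fun y hy => by
    by_contra hne
    simpa [hy] using hBpos y hne

def formMatrix (A : Finset Y) : Matrix A (Fin g) ℤ := Matrix.of fun w j => B w (Pi.single j 1)

theorem formMatrix_mulVec
    (hcompat : ∀ (y : Y) (x : Fin g → ℤ), Bb (iota (y : Fin g → ℤ)) (iota x) = (B y x : ℝ))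
    (A : Finset Y) (v : Fin g → ℝ) :
    (formMatrix B A).map ((↑) : ℤ → ℝ) *ᵥ v = fun w : A => Bb (iota (w : Y)) v := by
  funext w
  rw [apply_eq_sum_mul_single (Bb (iota w))]
  simp [Matrix.mulVec, dotProduct, formMatrix, ← iota_single, hcompat, mul_comm]

theorem injective_formMatrix_of_mem_extremePoints (hsymm : ∀ x y, Bb x y = Bb y x)
    (hcompat : ∀ (y : Y) (x : Fin g → ℤ), Bb (iota (y : Fin g → ℤ)) (iota x) = (B y x : ℝ))
    {W : Finset Y} {t : ℝ} {x : Fin g → ℝ}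
    (hx : x ∈ extremePoints ℝ (voronoiCell Bb (W : Set Y) t)) :
    Function.Injective ((formMatrix B
      (W.filter fun w : Y => Bb x (iota w) = t * Bb (iota w) (iota w))).map
        ((↑) : ℤ → ℝ)).mulVec := by
  intro v₁ v₂ h
  rw [← sub_eq_zero]
  refine eq_zero_of_mem_extremePoints_of_forall_active W.finite_toSet (fun w => Bb.flip (iota w))
    (fun w => t * Bb (iota w) (iota w)) hx fun w hw hact => ?_
  have := congrFun h ⟨w, Finset.mem_filter.mpr ⟨hw, hact⟩⟩
  simp only [formMatrix_mulVec Bb B hcompat] at this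
  simp [hsymm _ (iota w), this]

theorem mem_range_iota_of_forall_active (hsymm : ∀ x y, Bb x y = Bb y x)
    (hcompat : ∀ (y : Y) (x : Fin g → ℤ), Bb (iota (y : Fin g → ℤ)) (iota x) = (B y x : ℝ))
    (A : Finset Y) (hA : Function.Injective ((formMatrix B A).map ((↑) : ℤ → ℝ)).mulVec)
    {t : ℕ} (ht : ((formMatrix B A)ᵀ * formMatrix B A).det ∣ t) {x : Fin g → ℝ}
    (hact : ∀ w ∈ A, Bb x (iota w) = t * Bb (iota w) (iota w)) : x ∈ range iota := by
  set M := formMatrix B A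
  set d := (Mᵀ * M).det
  set z := (Mᵀ * M).adjugate *ᵥ (Mᵀ *ᵥ fun w : A => B w w)
  obtain ⟨q, hq⟩ := ht
  have hsys : M.map ((↑) : ℤ → ℝ) *ᵥ x = fun w => (((t : ℤ) • fun w : A => B w w) w : ℝ) := by
    funext w
    rw [formMatrix_mulVec Bb B hcompat]
    change Bb (iota (w : Y)) x = _
    rw [hsymm, hact w w.2, hcompat]
    simp
  have hsol : (d : ℝ) • x = iota ((t : ℤ) • z) := by
    rw [det_smul_eq_of_mulVec_eq M _ hsys, Matrix.mulVec_smul, Matrix.mulVec_smul]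
    rfl
  refine ⟨q • z, smul_right_injective _ ((Int.cast_ne_zero (α := ℝ)).mpr
    (det_transpose_mul_self_ne_zero M hA)) ?_⟩
  change (d : ℝ) • iota (q • z) = (d : ℝ) • x
  rw [hsol, iota_zsmul, iota_zsmul, smul_smul, hq, Int.cast_mul]

theorem exists_extremePoints_voronoiCell_subset (hsymm : ∀ x y, Bb x y = Bb y x)
    (hcompat : ∀ (y : Y) (x : Fin g → ℤ), Bb (iota (y : Fin g → ℤ)) (iota x) = (B y x : ℝ))
    (W : Finset Y) :
    ∃ D : ℕ, 0 < D ∧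
      ∀ t : ℕ, D ∣ t → extremePoints ℝ (voronoiCell Bb (W : Set Y) t) ⊆ range iota := by
  classical
  let G := fun A : Finset Y => (formMatrix B A)ᵀ * formMatrix B A
  set S := W.powerset.filter fun A => (G A).det ≠ 0
  refine ⟨∏ A ∈ S, (G A).det.natAbs,
    Finset.prod_pos fun A hA => Int.natAbs_pos.mpr (Finset.mem_filter.mp hA).2,
    fun t hD x hx => ?_⟩
  have hinj := injective_formMatrix_of_mem_extremePoints Bb B hsymm hcompat hx
  have hA : W.filter (fun w : Y => Bb x (iota w) = t * Bb (iota w) (iota w)) ∈ S :=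
    Finset.mem_filter.mpr ⟨Finset.mem_powerset.mpr (Finset.filter_subset _ _),
      det_transpose_mul_self_ne_zero _ hinj⟩
  refine mem_range_iota_of_forall_active Bb B hsymm hcompat _ hinj ?_
    fun w hw => (Finset.mem_filter.mp hw).2
  exact Int.natAbs_dvd.mp (Int.natCast_dvd_natCast.mpr ((Finset.dvd_prod_of_mem _ hA).trans hD))

variable {B} {N : ℕ} {φ : ((Fin g → ℤ) →ₗ[ℤ] ℤ) → Y}

theorem phi_neg (hB : Function.Injective B) (hφ : ∀ u, B (φ u) = (N : ℤ) • u)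
    (u : (Fin g → ℤ) →ₗ[ℤ] ℤ) :
    φ (-u) = -φ u :=
  hB (by rw [map_neg, hφ, hφ, smul_neg])

theorem phi_zero (hB : Function.Injective B) (hφ : ∀ u, B (φ u) = (N : ℤ) • u) : φ 0 = 0 :=
  hB (by rw [map_zero, hφ, smul_zero])

theorem apply_phi_proj
    (hcompat : ∀ (y : Y) (x : Fin g → ℤ), Bb (iota (y : Fin g → ℤ)) (iota x) = (B y x : ℝ))
    (hφ : ∀ u, B (φ u) = (N : ℤ) • u) (i : Fin g) (z : Fin g → ℝ) :
    Bb (iota (φ (LinearMap.proj i))) z = N * z i := by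
  suffices Bb (iota (φ (LinearMap.proj i))) = (N : ℝ) • LinearMap.proj i by rw [this]; rfl
  refine (Pi.basisFun ℝ (Fin g)).ext fun j => ?_
  rw [Pi.basisFun_apply, ← iota_single, hcompat, hφ]
  by_cases h : j = i <;> simp [h]

theorem vorP_zero_eq_voronoiCell (hsymm : ∀ x y, Bb x y = Bb y x) (hnonneg : ∀ x, 0 ≤ Bb x x)
    (hφ0 : φ 0 = 0) {t : ℕ} (ht : 0 < t) : VorP Bb φ t 0 = voronoiCell Bb (range φ) t := by
  ext x
  simp only [VorP, voronoiCell, mem_ofPred_eq, forall_mem_range, hφ0, ZeroMemClass.coe_zero,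
    smul_zero, iota_zero, sub_zero, iota_zsmul]
  refine forall_congr' fun u => ?_
  rw [Real.sqrt_le_sqrt_iff (hnonneg _)]
  simp only [map_sub, map_smul, LinearMap.sub_apply, LinearMap.smul_apply, smul_eq_mul,
    hsymm (iota (φ u)) x]
  have ht' : (0 : ℝ) < t := by exact_mod_cast ht
  push_cast
  constructor <;> intro h <;> nlinarith

theorem exists_abs_le_of_mem_voronoiCell (hsymm : ∀ x y, Bb x y = Bb y x)
    (hnonneg : ∀ x, 0 ≤ Bb x x)
    (hcompat : ∀ (y : Y) (x : Fin g → ℤ), Bb (iota (y : Fin g → ℤ)) (iota x) = (B y x : ℝ))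
    (hφ : ∀ u, B (φ u) = (N : ℤ) • u) (hN : 0 < N) :
    ∃ ρ : ℝ, ∀ W : Set Y, (∀ i, φ (LinearMap.proj i) ∈ W ∧ -φ (LinearMap.proj i) ∈ W) →
      ∀ t : ℝ, 0 ≤ t → ∀ x ∈ voronoiCell Bb W t, ∀ i, |x i| ≤ t * ρ := by
  have hN' : (0 : ℝ) < N := by exact_mod_cast hN
  set K := fun i => Bb (iota (φ (LinearMap.proj i))) (iota (φ (LinearMap.proj i)))
  refine ⟨∑ j, K j / N, fun W hW t ht x hx i => ?_⟩
  have hbound := abs_apply_le_of_mem_voronoiCell Bb (hW i).1 (hW i).2 hx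
  rw [hsymm, apply_phi_proj Bb hcompat hφ, abs_mul, Nat.abs_cast] at hbound
  have hK : K i / N ≤ ∑ j, K j / N :=
    Finset.single_le_sum (f := fun j => K j / N) (fun j _ => div_nonneg (hnonneg _) hN'.le)
      (Finset.mem_univ i)
  calc |x i| = N * |x i| / N := by field_simp
    _ ≤ t * K i / N := by gcongr
    _ ≤ t * ∑ j, K j / N := by rw [mul_div_assoc]; exact mul_le_mul_of_nonneg_left hK ht

theorem finite_setOf_apply_self_le (hsymm : ∀ x y, Bb x y = Bb y x) (hnonneg : ∀ x, 0 ≤ Bb x x)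
    (hcompat : ∀ (y : Y) (x : Fin g → ℤ), Bb (iota (y : Fin g → ℤ)) (iota x) = (B y x : ℝ))
    (hφ : ∀ u, B (φ u) = (N : ℤ) • u) (hN : 0 < N) (r : ℝ) :
    {w : Y | Bb (iota w) (iota w) ≤ r}.Finite := by
  have hN' : (0 : ℝ) < N := by exact_mod_cast hN
  set C := (∑ j, √(Bb (iota (φ (LinearMap.proj j))) (iota (φ (LinearMap.proj j))))) * √r / N
  refine ((finite_setOf_forall_abs_le C).preimage Subtype.val_injective.injOn).subset
    fun w hw i => ?_
  -- the coordinates of `w` are read off by pairing with the vectors `φ (proj i)`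
  have hcs := abs_apply_le_sqrt_mul_sqrt Bb hsymm hnonneg (iota (φ (LinearMap.proj i))) (iota w)
  rw [apply_phi_proj Bb hcompat hφ, abs_mul, Nat.abs_cast] at hcs
  calc |((w : Fin g → ℤ) i : ℝ)| = N * |iota w i| / N := by field_simp; rfl
    _ ≤ √(Bb (iota (φ (LinearMap.proj i))) (iota (φ (LinearMap.proj i)))) *
          √(Bb (iota w) (iota w)) / N := div_le_div_of_nonneg_right hcs hN'.le
    _ ≤ C := by
        dsimp only [C]
        gcongr
        · exact Finset.single_le_sum (f := fun j =>
            √(Bb (iota (φ (LinearMap.proj j))) (iota (φ (LinearMap.proj j)))))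
            (fun j _ => Real.sqrt_nonneg _) (Finset.mem_univ i)
        · exact hw

theorem exists_finset_voronoiCell_eq (hsymm : ∀ x y, Bb x y = Bb y x)
    (hnonneg : ∀ x, 0 ≤ Bb x x)
    (hcompat : ∀ (y : Y) (x : Fin g → ℤ), Bb (iota (y : Fin g → ℤ)) (iota x) = (B y x : ℝ))
    (hφ : ∀ u, B (φ u) = (N : ℤ) • u) (hN : 0 < N) (hφneg : ∀ u, φ (-u) = -φ u) :
    ∃ F : Finset Y, ∀ t : ℝ, 0 ≤ t →
      voronoiCell Bb (range φ) t = voronoiCell Bb (F : Set Y) t := by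
  obtain ⟨ρ, hρ⟩ := exists_abs_le_of_mem_voronoiCell Bb hsymm hnonneg hcompat hφ hN
  set K := fun i => Bb (iota (φ (LinearMap.proj i))) (iota (φ (LinearMap.proj i)))
  set c₀ := ∑ i, √(Bb (Pi.single i 1) (Pi.single i 1))
  -- on the box `|x i| ≤ tρ` every constraint with `√(Bb w w) ≥ ρ c₀` holds automatically
  set r := (ρ * c₀) ^ 2 + ∑ i, K i with hr
  have hfin := (finite_setOf_apply_self_le Bb hsymm hnonneg hcompat hφ hN r).inter_of_right
    (range φ)
  refine ⟨hfin.toFinset, fun t ht => Subset.antisymm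
    (voronoiCell_anti Bb (by rw [hfin.coe_toFinset]; exact inter_subset_left) t) ?_⟩
  have hKr : ∀ i, K i ≤ r := fun i => by
    linarith [sq_nonneg (ρ * c₀), Finset.single_le_sum (fun j _ => hnonneg (iota (φ
      (LinearMap.proj j)))) (Finset.mem_univ i)]
  have hproj : ∀ i, φ (LinearMap.proj i) ∈ hfin.toFinset ∧
      -φ (LinearMap.proj i) ∈ hfin.toFinset := fun i => by
    simp only [Finite.mem_toFinset, mem_inter_iff, mem_range, mem_ofPred_eq, NegMemClass.coe_neg,
      iota_neg, map_neg, LinearMap.neg_apply, neg_neg]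
    exact ⟨⟨⟨_, rfl⟩, hKr i⟩, ⟨⟨_, hφneg _⟩, hKr i⟩⟩
  intro x hx w hw
  by_cases hshort : Bb (iota w) (iota w) ≤ r
  · exact hx w (by simp [hw, hshort])
  have hlong : ρ * c₀ ≤ √(Bb (iota w) (iota w)) := (le_abs_self _).trans (Real.abs_le_sqrt
    (by linarith [Finset.sum_nonneg fun i (_ : i ∈ Finset.univ) => hnonneg (iota (φ
      (LinearMap.proj i)))]))
  calc Bb x (iota w) ≤ t * ρ * c₀ * √(Bb (iota w) (iota w)) :=
        apply_le_of_forall_abs_le Bb hsymm hnonneg (hρ _ hproj t ht x hx) _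
    _ ≤ t * √(Bb (iota w) (iota w)) * √(Bb (iota w) (iota w)) := by
        rw [mul_assoc t ρ]; gcongr
    _ = t * Bb (iota w) (iota w) := by rw [mul_assoc, Real.mul_self_sqrt (hnonneg _)]

end Lattice

theorem statement5_general
    (g : ℕ)
    (Y : Submodule ℤ (Fin g → ℤ))
    (B : Y →ₗ[ℤ] (Fin g → ℤ) →ₗ[ℤ] ℤ)
    (hBpos : ∀ y : Y, y ≠ 0 → 0 < B y (y : Fin g → ℤ))
    (N : ℕ) (hNpos : 0 < N)
    (φ : ((Fin g → ℤ) →ₗ[ℤ] ℤ) → Y)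
    (hφ : ∀ u : (Fin g → ℤ) →ₗ[ℤ] ℤ, B (φ u) = (N : ℤ) • u)
    (Bb : (Fin g → ℝ) →ₗ[ℝ] (Fin g → ℝ) →ₗ[ℝ] ℝ)
    (hBbsymm : ∀ x y : Fin g → ℝ, Bb x y = Bb y x)
    (hBbpos : ∀ x : Fin g → ℝ, x ≠ 0 → 0 < Bb x x)
    (hBbcompat : ∀ (y : Y) (x : Fin g → ℤ), Bb (iota (y : Fin g → ℤ)) (iota x) = (B y x : ℝ)) :
    ∃ ℓ₀ : ℕ, 0 < ℓ₀ ∧ ∀ ℓ : ℕ, 0 < ℓ → IsIntegral (VorP Bb φ (ℓ₀ * ℓ) 0) := by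
  have hnonneg : ∀ x, 0 ≤ Bb x x := fun x =>
    (eq_or_ne x 0).elim (fun h => by simp [h]) fun h => (hBbpos x h).le
  have hB := injective_of_apply_self_pos B hBpos
  have hφneg := phi_neg hB hφ
  obtain ⟨ρ, hρ⟩ := exists_abs_le_of_mem_voronoiCell Bb hBbsymm hnonneg hBbcompat hφ hNpos
  obtain ⟨F, hF⟩ := exists_finset_voronoiCell_eq Bb hBbsymm hnonneg hBbcompat hφ hNpos hφneg
  obtain ⟨D, hD, hext⟩ := exists_extremePoints_voronoiCell_subset Bb B hBbsymm hBbcompat F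
  set c := ∑ i, √(Bb (Pi.single i 1) (Pi.single i 1))
  refine ⟨D * (⌈c⌉₊ + 1), by positivity, fun ℓ hℓ => ?_⟩
  set t := D * (⌈c⌉₊ + 1) * ℓ
  have ht : c ≤ t := (Nat.le_ceil c).trans (by
    exact_mod_cast (Nat.le_succ _).trans ((Nat.le_mul_of_pos_left _ hD).trans
      (Nat.le_mul_of_pos_right _ hℓ)))
  rw [vorP_zero_eq_voronoiCell Bb hBbsymm hnonneg (phi_zero hB hφ) (by positivity)]
  refine isIntegral_of_extremePoints_subset
    (hρ (range φ) (fun i => ⟨⟨_, rfl⟩, ⟨_, hφneg _⟩⟩) _ t.cast_nonneg)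
    (isClosed_voronoiCell Bb _ _) (convex_voronoiCell Bb _ _)
    (fun _ => neg_mem_voronoiCell Bb (by rintro _ ⟨u, rfl⟩; exact ⟨-u, hφneg u⟩))
    (zero_mem_voronoiCell Bb hnonneg _ t.cast_nonneg)
    (fun i => single_mem_voronoiCell Bb B hBbsymm hnonneg hBbcompat hBpos _ i
      ((Finset.single_le_sum (f := fun j => √(Bb (Pi.single j 1) (Pi.single j 1)))
        (fun j _ => Real.sqrt_nonneg _) (Finset.mem_univ i)).trans ht)) ?_
  rw [hF t t.cast_nonneg]
  exact hext t (dvd_mul_of_dvd_left (dvd_mul_right _ _) _)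

/-- there is `ℓ₀ > 0` such that `Σ_{ℓ₀ℓ}(0)` is integral for every `ℓ > 0`. -/
theorem statement5
    (g : ℕ) (hg : 1 ≤ g)
    (Y : Submodule ℤ (Fin g → ℤ))
    (hYfin : Y.toAddSubgroup.index ≠ 0)
    (B : Y →ₗ[ℤ] (Fin g → ℤ) →ₗ[ℤ] ℤ)
    (hBsymm : ∀ y z : Y, B y (z : Fin g → ℤ) = B z (y : Fin g → ℤ))
    (hBpos : ∀ y : Y, y ≠ 0 → 0 < B y (y : Fin g → ℤ))
    (N : ℕ) (hN : N = (LinearMap.range B).toAddSubgroup.index) (hNpos : 0 < N)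
    (φ : ((Fin g → ℤ) →ₗ[ℤ] ℤ) → Y)
    (hφ : ∀ u : (Fin g → ℤ) →ₗ[ℤ] ℤ, B (φ u) = (N : ℤ) • u)
    (Bb : (Fin g → ℝ) →ₗ[ℝ] (Fin g → ℝ) →ₗ[ℝ] ℝ)
    (hBbsymm : ∀ x y : Fin g → ℝ, Bb x y = Bb y x)
    (hBbpos : ∀ x : Fin g → ℝ, x ≠ 0 → 0 < Bb x x)
    (hBbcompat : ∀ (y : Y) (x : Fin g → ℤ), Bb (iota (y : Fin g → ℤ)) (iota x) = (B y x : ℝ)) :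
    ∃ ℓ₀ : ℕ, 0 < ℓ₀ ∧ ∀ ℓ : ℕ, 0 < ℓ → IsIntegral (VorP Bb φ (ℓ₀ * ℓ) 0) :=
  statement5_general g Y B hBpos N hNpos φ hφ Bb hBbsymm hBbpos hBbcompat

end NFC
end

section
/- For every γ ∈ Σ_ℓ and z ∈ X^∨ one has E_ℓ(z) + z(γ) ≥ 0, and E_ℓ(z) + z(γ) = 0 if and only if γ + 2ℓφ(z) ∈ Σ_ℓ. -/
open scoped BigOperators Pointwise

namespace NFC

/-!
Positive definiteness makes `β` injective, so `φ` is additive, and symmetry of `B` gives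
`u(φ v) = v(φ u)`. Hence `E_ℓ` is a quadratic form with polar form `2ℓ · u(φ v)`, and
`E_ℓ(u) + u(γ + 2ℓφ(z)) = (E_ℓ(u + z) + (u + z)(γ)) - (E_ℓ(z) + z(γ))`.
If `E_ℓ(z) + z(γ) = 0` the right side is `≥ 0` for `γ ∈ Σ_ℓ`; conversely `u = -z` turns the
left side into `-(E_ℓ(z) + z(γ))`.
-/

section

variable {X : Type*} [AddCommGroup X] {Y : Submodule ℤ X} {B : Y →ₗ[ℤ] X →ₗ[ℤ] ℤ}
  {N : ℕ} {φ : (X →ₗ[ℤ] ℤ) → Y}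

theorem injective_of_pos_apply_self (hBpos : ∀ y : Y, y ≠ 0 → 0 < B y (y : X)) :
    Function.Injective B := by
  intro y y' h
  by_contra hne
  have := hBpos (y - y') (sub_ne_zero.mpr hne)
  rw [map_sub, h, sub_self] at this
  exact this.false

theorem phi_add (hB : Function.Injective B) (hφ : ∀ u, B (φ u) = (N : ℤ) • u)
    (u v : X →ₗ[ℤ] ℤ) : φ (u + v) = φ u + φ v :=
  hB <| by rw [map_add, hφ, hφ, hφ, smul_add]

theorem apply_phi_comm (hBsymm : ∀ y z : Y, B y (z : X) = B z (y : X))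
    (hN : N ≠ 0) (hφ : ∀ u, B (φ u) = (N : ℤ) • u) (u v : X →ₗ[ℤ] ℤ) :
    u (φ v : X) = v (φ u : X) := by
  have h := hBsymm (φ u) (φ v)
  rw [hφ, hφ, LinearMap.smul_apply, LinearMap.smul_apply, smul_eq_mul, smul_eq_mul] at h
  exact mul_left_cancel₀ (Int.natCast_ne_zero.mpr hN) h

end

section

variable {g : ℕ} {Y : Submodule ℤ (Fin g → ℤ)} {φ : ((Fin g → ℤ) →ₗ[ℤ] ℤ) → Y}

theorem El_add (hadd : ∀ u v, φ (u + v) = φ u + φ v)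
    (hcomm : ∀ u v : (Fin g → ℤ) →ₗ[ℤ] ℤ, u (φ v : Fin g → ℤ) = v (φ u : Fin g → ℤ))
    (ℓ : ℕ) (u v : (Fin g → ℤ) →ₗ[ℤ] ℤ) :
    El φ ℓ (u + v) = El φ ℓ u + El φ ℓ v + 2 * ℓ * u (φ v : Fin g → ℤ) := by
  simp only [El, hadd, Submodule.coe_add, map_add, LinearMap.add_apply, hcomm v u]
  ring

theorem El_add_apply_add_smul_phi (hadd : ∀ u v, φ (u + v) = φ u + φ v)
    (hcomm : ∀ u v : (Fin g → ℤ) →ₗ[ℤ] ℤ, u (φ v : Fin g → ℤ) = v (φ u : Fin g → ℤ))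
    (ℓ : ℕ) (γ : Fin g → ℤ) (u z : (Fin g → ℤ) →ₗ[ℤ] ℤ) :
    El φ ℓ u + u (γ + (2 * (ℓ : ℤ)) • (φ z : Fin g → ℤ)) =
      (El φ ℓ (u + z) + (u + z) γ) - (El φ ℓ z + z γ) := by
  rw [El_add hadd hcomm, map_add, map_smul, smul_eq_mul, LinearMap.add_apply]
  ring

end

theorem statement6_general
    (g : ℕ)
    (Y : Submodule ℤ (Fin g → ℤ))
    (B : Y →ₗ[ℤ] (Fin g → ℤ) →ₗ[ℤ] ℤ)
    (hBsymm : ∀ y z : Y, B y (z : Fin g → ℤ) = B z (y : Fin g → ℤ))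
    (hBpos : ∀ y : Y, y ≠ 0 → 0 < B y (y : Fin g → ℤ))
    (N : ℕ) (hNpos : 0 < N)
    (φ : ((Fin g → ℤ) →ₗ[ℤ] ℤ) → Y)
    (hφ : ∀ u : (Fin g → ℤ) →ₗ[ℤ] ℤ, B (φ u) = (N : ℤ) • u)
    (ℓ : ℕ) :
    ∀ γ ∈ SigmaL φ ℓ, ∀ z : (Fin g → ℤ) →ₗ[ℤ] ℤ,
      0 ≤ El φ ℓ z + z γ ∧
      (El φ ℓ z + z γ = 0 ↔ γ + (2 * (ℓ : ℤ)) • ((φ z : Fin g → ℤ)) ∈ SigmaL φ ℓ) := by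
  have hadd := phi_add (injective_of_pos_apply_self hBpos) hφ
  have hcomm := apply_phi_comm hBsymm hNpos.ne' hφ
  intro γ hγ z
  refine ⟨hγ z, fun h u => ?_, fun h => ?_⟩
  · rw [El_add_apply_add_smul_phi hadd hcomm, h, sub_zero]
    exact hγ (u + z)
  · have h' := h (-z)
    rw [El_add_apply_add_smul_phi hadd hcomm, neg_add_cancel] at h'
    simp only [El, LinearMap.zero_apply, mul_zero, add_zero, zero_sub, neg_nonneg] at h'
    exact le_antisymm h' (hγ z)

/-- for `γ ∈ Σ_ℓ` and `z ∈ X^∨`, `E_ℓ(z) + z(γ) ≥ 0`, with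
`E_ℓ(z) + z(γ) = 0` iff `γ + 2ℓφ(z) ∈ Σ_ℓ`. -/
theorem statement6
    (g : ℕ) (hg : 1 ≤ g)
    (Y : Submodule ℤ (Fin g → ℤ))
    (hYfin : Y.toAddSubgroup.index ≠ 0)
    (B : Y →ₗ[ℤ] (Fin g → ℤ) →ₗ[ℤ] ℤ)
    (hBsymm : ∀ y z : Y, B y (z : Fin g → ℤ) = B z (y : Fin g → ℤ))
    (hBpos : ∀ y : Y, y ≠ 0 → 0 < B y (y : Fin g → ℤ))
    (N : ℕ) (hN : N = (LinearMap.range B).toAddSubgroup.index) (hNpos : 0 < N)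
    (φ : ((Fin g → ℤ) →ₗ[ℤ] ℤ) → Y)
    (hφ : ∀ u : (Fin g → ℤ) →ₗ[ℤ] ℤ, B (φ u) = (N : ℤ) • u)
    (ℓ : ℕ) (hℓ : 0 < ℓ) :
    ∀ γ ∈ SigmaL φ ℓ, ∀ z : (Fin g → ℤ) →ₗ[ℤ] ℤ,
      0 ≤ El φ ℓ z + z γ ∧
      (El φ ℓ z + z γ = 0 ↔ γ + (2 * (ℓ : ℤ)) • ((φ z : Fin g → ℤ)) ∈ SigmaL φ ℓ) :=
  statement6_general g Y B hBsymm hBpos N hNpos φ hφ ℓ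

end NFC
end

section
/- For γ ∈ Σ_ℓ, z ∈ X^∨ and x := γ + 2ℓφ(z) one has D_ℓ(x) = C_ℓ(x) − C_ℓ(γ); in particular D_ℓ(x) ≤ C_ℓ(x), with equality if and only if γ = 0, i.e. if and only if x ∈ 2ℓφ(X^∨). -/
open scoped BigOperators Pointwise

namespace NFC

/-! The identity is the expansion of the quadratic form `B̄` at `x = γ + 2ℓφ(z)`: since
`B̄(φ(u), a) = N · u(a)`, one gets `B̄(x,x) = B̄(γ,γ) + 4ℓN · (E_ℓ(z) + z(γ))`, and positivity of
`B̄` gives the inequality with its equality case. For the last equivalence, if `x = 2ℓφ(u)` then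
`γ = -2ℓφ(v)` with `v = z - u`, and testing `γ ∈ Σ_ℓ` against `v` gives `v(φ(v)) ≤ 0`, whereas
`N · v(φ(v)) = B(φ(v), φ(v)) > 0` unless `φ(v) = 0`. -/

open Function

theorem injective_of_apply_self_pos_s8 {R M : Type*} [CommRing R] [Preorder R] [AddCommGroup M]
    [Module R M] {Y : Submodule R M} {B : Y →ₗ[R] M →ₗ[R] R}
    (hB : ∀ y : Y, y ≠ 0 → 0 < B y y) : Injective B := by
  refine (injective_iff_map_eq_zero B).2 fun y hy => ?_
  by_contra hne
  simpa [hy] using hB y hne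

theorem map_sub_of_comp_eq_smul {R M P : Type*} [Ring R] [AddCommGroup M] [Module R M]
    [AddCommGroup P] [Module R P] {B : M →ₗ[R] P} (hB : Injective B) {φ : P → M} {c : R}
    (hφ : ∀ u, B (φ u) = c • u) (a b : P) : φ (a - b) = φ a - φ b :=
  hB <| by rw [map_sub, hφ, hφ, hφ, smul_sub]

section BilinearForm

variable {R V : Type*} [CommRing R] [AddCommGroup V] [Module R V] (Bb : V →ₗ[R] V →ₗ[R] R)

theorem apply_add_smul_add_smul (hsymm : ∀ v w, Bb v w = Bb w v) (v w : V) (t : R) :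
    Bb (v + t • w) (v + t • w) = Bb v v + 2 * t * Bb w v + t ^ 2 * Bb w w := by
  simp only [map_add, map_smul, LinearMap.add_apply, LinearMap.smul_apply, smul_eq_mul,
    hsymm v w]
  ring

variable [PartialOrder R] {Bb}

theorem apply_self_nonneg (hpos : ∀ v, v ≠ 0 → 0 < Bb v v) (v : V) : 0 ≤ Bb v v := by
  rcases eq_or_ne v 0 with rfl | hv
  · simp
  · exact (hpos v hv).le

theorem apply_self_eq_zero_iff (hpos : ∀ v, v ≠ 0 → 0 < Bb v v) {v : V} : Bb v v = 0 ↔ v = 0 :=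
  ⟨fun h => by_contra fun hv => (hpos v hv).ne' h, by rintro rfl; simp⟩

end BilinearForm

theorem iota_add_zsmul {g : ℕ} (a b : Fin g → ℤ) (k : ℤ) :
    iota (a + k • b) = iota a + (k : ℝ) • iota b := by
  funext i
  simp [iota]

theorem iota_eq_zero_iff {g : ℕ} {a : Fin g → ℤ} : iota a = 0 ↔ a = 0 := by
  simp [iota, funext_iff]

section Setting

variable {g : ℕ} {Y : Submodule ℤ (Fin g → ℤ)} {B : Y →ₗ[ℤ] (Fin g → ℤ) →ₗ[ℤ] ℤ} {N : ℕ}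
  {φ : ((Fin g → ℤ) →ₗ[ℤ] ℤ) → Y} {Bb : (Fin g → ℝ) →ₗ[ℝ] (Fin g → ℝ) →ₗ[ℝ] ℝ}

theorem phi_eq_zero_of_neg_mem_sigmaL (hBpos : ∀ y : Y, y ≠ 0 → 0 < B y (y : Fin g → ℤ))
    (hφ : ∀ u, B (φ u) = (N : ℤ) • u) {ℓ : ℕ} (hℓ : 0 < ℓ) {v : (Fin g → ℤ) →ₗ[ℤ] ℤ}
    (hv : -(2 * (ℓ : ℤ)) • (φ v : Fin g → ℤ) ∈ SigmaL φ ℓ) : φ v = 0 := by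
  by_contra hne
  have hBφ : 0 < (N : ℤ) * v (φ v) := by simpa [hφ] using hBpos _ hne
  have hmem : 0 ≤ El φ ℓ v + v (-(2 * (ℓ : ℤ)) • (φ v : Fin g → ℤ)) := hv v
  simp only [El, map_smul, smul_eq_mul] at hmem
  have hℓ' : (0 : ℤ) < ℓ := by exact_mod_cast hℓ
  nlinarith

theorem bilin_iota_phi (hφ : ∀ u, B (φ u) = (N : ℤ) • u)
    (hBbcompat : ∀ (y : Y) (x : Fin g → ℤ), Bb (iota (y : Fin g → ℤ)) (iota x) = (B y x : ℝ))
    (u : (Fin g → ℤ) →ₗ[ℤ] ℤ) (a : Fin g → ℤ) :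
    Bb (iota (φ u : Fin g → ℤ)) (iota a) = N * u a := by
  simp [hBbcompat, hφ]

theorem bilin_iota_add_two_mul_phi (hφ : ∀ u, B (φ u) = (N : ℤ) • u)
    (hBbsymm : ∀ x y : Fin g → ℝ, Bb x y = Bb y x)
    (hBbcompat : ∀ (y : Y) (x : Fin g → ℤ), Bb (iota (y : Fin g → ℤ)) (iota x) = (B y x : ℝ))
    (ℓ : ℕ) (γ : Fin g → ℤ) (z : (Fin g → ℤ) →ₗ[ℤ] ℤ) :
    Bb (iota (γ + (2 * (ℓ : ℤ)) • (φ z : Fin g → ℤ)))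
        (iota (γ + (2 * (ℓ : ℤ)) • (φ z : Fin g → ℤ))) =
      Bb (iota γ) (iota γ) + 4 * ℓ * N * (El φ ℓ z + z γ : ℤ) := by
  rw [iota_add_zsmul, apply_add_smul_add_smul Bb hBbsymm, bilin_iota_phi hφ hBbcompat,
    bilin_iota_phi hφ hBbcompat, El]
  push_cast
  ring

end Setting

theorem statement8_general
    (g : ℕ)
    (Y : Submodule ℤ (Fin g → ℤ))
    (B : Y →ₗ[ℤ] (Fin g → ℤ) →ₗ[ℤ] ℤ)
    (hBpos : ∀ y : Y, y ≠ 0 → 0 < B y (y : Fin g → ℤ))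
    (N : ℕ) (hNpos : 0 < N)
    (φ : ((Fin g → ℤ) →ₗ[ℤ] ℤ) → Y)
    (hφ : ∀ u : (Fin g → ℤ) →ₗ[ℤ] ℤ, B (φ u) = (N : ℤ) • u)
    (Bb : (Fin g → ℝ) →ₗ[ℝ] (Fin g → ℝ) →ₗ[ℝ] ℝ)
    (hBbsymm : ∀ x y : Fin g → ℝ, Bb x y = Bb y x)
    (hBbpos : ∀ x : Fin g → ℝ, x ≠ 0 → 0 < Bb x x)
    (hBbcompat : ∀ (y : Y) (x : Fin g → ℤ), Bb (iota (y : Fin g → ℤ)) (iota x) = (B y x : ℝ))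
    (ℓ : ℕ) (hℓ : 0 < ℓ)
    (γ : Fin g → ℤ) (hγ : γ ∈ SigmaL φ ℓ) (z : (Fin g → ℤ) →ₗ[ℤ] ℤ)
    (x : Fin g → ℤ) (hx : x = γ + (2 * (ℓ : ℤ)) • ((φ z : Fin g → ℤ))) :
    ((El φ ℓ z + z γ : ℤ) : ℝ) =
        Bb (iota x) (iota x) / (4 * (ℓ : ℝ) * (N : ℝ)) -
        Bb (iota γ) (iota γ) / (4 * (ℓ : ℝ) * (N : ℝ)) ∧
    ((El φ ℓ z + z γ : ℤ) : ℝ) ≤ Bb (iota x) (iota x) / (4 * (ℓ : ℝ) * (N : ℝ)) ∧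
    (((El φ ℓ z + z γ : ℤ) : ℝ) = Bb (iota x) (iota x) / (4 * (ℓ : ℝ) * (N : ℝ)) ↔ γ = 0) ∧
    (γ = 0 ↔ ∃ u : (Fin g → ℤ) →ₗ[ℤ] ℤ, x = (2 * (ℓ : ℤ)) • ((φ u : Fin g → ℤ))) := by
  have hC : 0 < 4 * (ℓ : ℝ) * N := by positivity
  have hD : ((El φ ℓ z + z γ : ℤ) : ℝ) =
      Bb (iota x) (iota x) / (4 * ℓ * N) - Bb (iota γ) (iota γ) / (4 * ℓ * N) := by
    rw [hx, bilin_iota_add_two_mul_phi hφ hBbsymm hBbcompat]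
    field_simp
    ring
  have hCγ : Bb (iota γ) (iota γ) / (4 * ℓ * N) = 0 ↔ γ = 0 := by
    rw [div_eq_zero_iff, apply_self_eq_zero_iff hBbpos, iota_eq_zero_iff, or_iff_left hC.ne']
  refine ⟨hD, ?_, by rw [hD, sub_eq_self, hCγ], ⟨?_, ?_⟩⟩
  · have := div_nonneg (apply_self_nonneg hBbpos (iota γ)) hC.le
    linarith
  · rintro rfl
    exact ⟨z, by rw [hx, zero_add]⟩
  · rintro ⟨u, hu⟩
    have hγφ : γ = -(2 * (ℓ : ℤ)) • (φ (z - u) : Fin g → ℤ) := by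
      rw [map_sub_of_comp_eq_smul (injective_of_apply_self_pos_s8 hBpos) hφ, Submodule.coe_sub,
        neg_smul, eq_neg_iff_add_eq_zero, smul_sub, ← hu, hx]
      abel
    rw [hγφ, phi_eq_zero_of_neg_mem_sigmaL hBpos hφ hℓ (hγφ ▸ hγ)]
    simp

/-- for `x = γ + 2ℓφ(z)` with `γ ∈ Σ_ℓ`, `D_ℓ(x) = C_ℓ(x) − C_ℓ(γ)`;
in particular `D_ℓ(x) ≤ C_ℓ(x)`, with equality iff `γ = 0`, i.e. iff `x ∈ 2ℓφ(X^∨)`,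
where `C_ℓ(y) = B̄(y,y)/(4ℓN)`. -/
theorem statement8
    (g : ℕ) (hg : 1 ≤ g)
    (Y : Submodule ℤ (Fin g → ℤ))
    (hYfin : Y.toAddSubgroup.index ≠ 0)
    (B : Y →ₗ[ℤ] (Fin g → ℤ) →ₗ[ℤ] ℤ)
    (hBsymm : ∀ y z : Y, B y (z : Fin g → ℤ) = B z (y : Fin g → ℤ))
    (hBpos : ∀ y : Y, y ≠ 0 → 0 < B y (y : Fin g → ℤ))
    (N : ℕ) (hN : N = (LinearMap.range B).toAddSubgroup.index) (hNpos : 0 < N)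
    (φ : ((Fin g → ℤ) →ₗ[ℤ] ℤ) → Y)
    (hφ : ∀ u : (Fin g → ℤ) →ₗ[ℤ] ℤ, B (φ u) = (N : ℤ) • u)
    (Bb : (Fin g → ℝ) →ₗ[ℝ] (Fin g → ℝ) →ₗ[ℝ] ℝ)
    (hBbsymm : ∀ x y : Fin g → ℝ, Bb x y = Bb y x)
    (hBbpos : ∀ x : Fin g → ℝ, x ≠ 0 → 0 < Bb x x)
    (hBbcompat : ∀ (y : Y) (x : Fin g → ℤ), Bb (iota (y : Fin g → ℤ)) (iota x) = (B y x : ℝ))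
    (ℓ : ℕ) (hℓ : 0 < ℓ)
    (γ : Fin g → ℤ) (hγ : γ ∈ SigmaL φ ℓ) (z : (Fin g → ℤ) →ₗ[ℤ] ℤ)
    (x : Fin g → ℤ) (hx : x = γ + (2 * (ℓ : ℤ)) • ((φ z : Fin g → ℤ))) :
    ((El φ ℓ z + z γ : ℤ) : ℝ) =
        Bb (iota x) (iota x) / (4 * (ℓ : ℝ) * (N : ℝ)) -
        Bb (iota γ) (iota γ) / (4 * (ℓ : ℝ) * (N : ℝ)) ∧
    ((El φ ℓ z + z γ : ℤ) : ℝ) ≤ Bb (iota x) (iota x) / (4 * (ℓ : ℝ) * (N : ℝ)) ∧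
    (((El φ ℓ z + z γ : ℤ) : ℝ) = Bb (iota x) (iota x) / (4 * (ℓ : ℝ) * (N : ℝ)) ↔ γ = 0) ∧
    (γ = 0 ↔ ∃ u : (Fin g → ℤ) →ₗ[ℤ] ℤ, x = (2 * (ℓ : ℤ)) • ((φ u : Fin g → ℤ))) :=
  statement8_general g Y B hBpos N hNpos φ hφ Bb hBbsymm hBbpos hBbcompat ℓ hℓ γ hγ z x hx

end NFC
end
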